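/- The two-particle impenetrable Bose gas density matrix on a circle of circumference L satisfies ρ^C_2(x;0) = (4/(πL)) [ π(1/2 − x/L) cos(πx/L) + sin(πx/L) ] for 0 ≤ x ≤ L. -/

import Mathlib

open Real

lemma abs_exp_add_exp (p q : ℝ) :
    ‖Complex.exp (↑p * Complex.I) + Complex.exp (↑q * Complex.I)‖ =
      2 * |Real.cos ((p - q)/2)| := by
  have e1 : Complex.exp (↑p * Complex.I) + Complex.exp (↑q * Complex.I)
      = Complex.exp (↑((p+q)/2) * Complex.I) *
        (Complex.exp (↑((p-q)/2) * Complex.I) + Complex.exp (↑(-((p-q)/2)) * Complex.I)) := by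
    rw [mul_add, ← Complex.exp_add, ← Complex.exp_add]
    congr 1 <;> push_cast <;> ring
  have e2 : Complex.exp (↑((p-q)/2) * Complex.I) + Complex.exp (↑(-((p-q)/2)) * Complex.I)
      = ((2 * Real.cos ((p-q)/2) : ℝ) : ℂ) := by
    rw [Complex.exp_mul_I, Complex.exp_mul_I, Complex.ofReal_neg, Complex.cos_neg,
      Complex.sin_neg, ← Complex.ofReal_cos]
    push_cast
    ring
  rw [e1, e2, norm_mul, Complex.norm_exp_ofReal_mul_I, one_mul, Complex.norm_real, Real.norm_eq_abs,
    abs_mul, abs_two]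

lemma prod_to_sum (X Y : ℝ) : Real.cos X * Real.cos Y = (Real.cos (X+Y) + Real.cos (X-Y))/2 := by
  rw [Real.cos_add, Real.cos_sub]; ring

lemma hasDerivAt_F (a t : ℝ) :
    HasDerivAt (fun t => t * Real.cos a / 2 + Real.sin (2*π*t - a)/(4*π))
      (Real.cos (a - π*t) * Real.cos (π*t)) t := by
  have h1 : HasDerivAt (fun t : ℝ => t * Real.cos a / 2) (Real.cos a / 2) t := by
    simpa using ((hasDerivAt_id t).mul_const (Real.cos a)).div_const 2
  have h2 : HasDerivAt (fun t : ℝ => 2*π*t - a) (2*π) t := by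
    simpa using ((hasDerivAt_id t).const_mul (2*π)).sub_const a
  have h3 := (Real.hasDerivAt_sin (2*π*t - a)).comp t h2
  have h4 := h1.add (h3.div_const (4*π))
  refine h4.congr_deriv ?_
  have hπ : (π:ℝ) ≠ 0 := Real.pi_ne_zero
  rw [prod_to_sum, show a - π*t + π*t = a by ring, show a - π*t - π*t = -(2*π*t - a) by ring,
    Real.cos_neg]
  field_simp
  ring

lemma integral_cos_cos (a u v : ℝ) :
    ∫ t in u..v, Real.cos (a - π*t) * Real.cos (π*t)
      = (v * Real.cos a / 2 + Real.sin (2*π*v - a)/(4*π))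
        - (u * Real.cos a / 2 + Real.sin (2*π*u - a)/(4*π)) := by
  apply intervalIntegral.integral_eq_sub_of_hasDerivAt (fun t _ => hasDerivAt_F a t)
  apply Continuous.intervalIntegrable
  fun_prop

set_option maxHeartbeats 1000000 in
theorem rho2_impenetrable_bose_circle (L x : ℝ) (hL : 0 < L) (hx0 : 0 ≤ x) (hxL : x ≤ L) :
    (1 / L) * (∫ t in (-(1:ℝ)/2)..(1/2),
        ‖Complex.exp (2 * π * Complex.I * (x / L)) + Complex.exp (2 * π * Complex.I * t)‖ *
          ‖1 + Complex.exp (2 * π * Complex.I * t)‖) =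
      (4 / (π * L)) * (π * (1 / 2 - x / L) * Real.cos (π * x / L) + Real.sin (π * x / L)) := by
  have hπ := Real.pi_pos
  set r := x / L with hrdef
  have hr0 : 0 ≤ r := div_nonneg hx0 hL.le
  have hr1 : r ≤ 1 := (div_le_one hL).mpr hxL
  set c : ℝ := r - 1/2 with hcdef
  have hc1 : -(1:ℝ)/2 ≤ c := by rw [hcdef]; linarith
  have hc2 : c ≤ 1/2 := by rw [hcdef]; linarith
  -- Step 1: rewrite the integrand
  have hint : ∀ t : ℝ,
      ‖Complex.exp (2 * π * Complex.I * (x / L)) + Complex.exp (2 * π * Complex.I * t)‖ *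
        ‖1 + Complex.exp (2 * π * Complex.I * t)‖
      = 4 * (|Real.cos (π*r - π*t)| * |Real.cos (π*t)|) := by
    intro t
    have h1 : (2 * (π:ℂ) * Complex.I * (↑x / ↑L)) = ↑(2*π*r) * Complex.I := by
      rw [hrdef]; push_cast; ring
    have h2 : (2 * (π:ℂ) * Complex.I * ↑t) = ↑(2*π*t) * Complex.I := by push_cast; ring
    have h3 : (1:ℂ) = Complex.exp (↑(0:ℝ) * Complex.I) := by simp
    rw [h1, h2, h3, abs_exp_add_exp, abs_exp_add_exp,
      show (2*π*r - 2*π*t)/2 = π*r - π*t by ring,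
      show ((0:ℝ) - 2*π*t)/2 = -(π*t) by ring, Real.cos_neg]
    ring
  rw [intervalIntegral.integral_congr (g := fun t => 4 * (|Real.cos (π*r - π*t)| * |Real.cos (π*t)|))
    (fun t _ => hint t), intervalIntegral.integral_const_mul]
  -- Step 2: split the integral at c
  have hcont : Continuous (fun t => |Real.cos (π*r - π*t)| * |Real.cos (π*t)|) := by fun_prop
  have hsplit : (∫ t in (-(1:ℝ)/2)..(1/2), |Real.cos (π*r - π*t)| * |Real.cos (π*t)|)
      = (∫ t in (-(1:ℝ)/2)..c, |Real.cos (π*r - π*t)| * |Real.cos (π*t)|)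
        + ∫ t in c..(1/2), |Real.cos (π*r - π*t)| * |Real.cos (π*t)| :=
    (intervalIntegral.integral_add_adjacent_intervals (hcont.intervalIntegrable _ _)
      (hcont.intervalIntegrable _ _)).symm
  rw [hsplit]
  -- first piece: integrand = -(cos·cos)
  have hfirst : (∫ t in (-(1:ℝ)/2)..c, |Real.cos (π*r - π*t)| * |Real.cos (π*t)|)
      = ∫ t in (-(1:ℝ)/2)..c, -(Real.cos (π*r - π*t) * Real.cos (π*t)) := by
    apply intervalIntegral.integral_congr
    intro t ht
    rw [Set.uIcc_of_le hc1] at ht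
    obtain ⟨ht1, ht2⟩ := ht
    have ht2' : t ≤ r - 1/2 := by rw [hcdef] at ht2; exact ht2
    have ht2'' : t ≤ 1/2 := by linarith
    have p1 : π * t ≤ π * (r - 1/2) := mul_le_mul_of_nonneg_left ht2' hπ.le
    have p2 : π * (-(1:ℝ)/2) ≤ π * t := mul_le_mul_of_nonneg_left ht1 hπ.le
    have p3 : π * r ≤ π * 1 := mul_le_mul_of_nonneg_left hr1 hπ.le
    have p4 : π * t ≤ π * (1/2) := mul_le_mul_of_nonneg_left ht2'' hπ.le
    have hA : Real.cos (π*r - π*t) ≤ 0 := by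
      apply Real.cos_nonpos_of_pi_div_two_le_of_le <;> nlinarith
    have hB : 0 ≤ Real.cos (π*t) := by
      apply Real.cos_nonneg_of_mem_Icc
      constructor <;> nlinarith
    simp only [abs_of_nonpos hA, abs_of_nonneg hB]
    ring
  have hsecond : (∫ t in c..(1:ℝ)/2, |Real.cos (π*r - π*t)| * |Real.cos (π*t)|)
      = ∫ t in c..(1:ℝ)/2, Real.cos (π*r - π*t) * Real.cos (π*t) := by
    apply intervalIntegral.integral_congr
    intro t ht
    rw [Set.uIcc_of_le hc2] at ht
    obtain ⟨ht1, ht2⟩ := ht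
    have ht1' : r - 1/2 ≤ t := by rw [hcdef] at ht1; exact ht1
    have ht1'' : -(1:ℝ)/2 ≤ t := by linarith
    have p1 : π * (r - 1/2) ≤ π * t := mul_le_mul_of_nonneg_left ht1' hπ.le
    have p2 : π * t ≤ π * (1/2) := mul_le_mul_of_nonneg_left ht2 hπ.le
    have p3 : π * 0 ≤ π * r := mul_le_mul_of_nonneg_left hr0 hπ.le
    have p4 : π * (-(1:ℝ)/2) ≤ π * t := mul_le_mul_of_nonneg_left ht1'' hπ.le
    have hA : 0 ≤ Real.cos (π*r - π*t) := by
      apply Real.cos_nonneg_of_mem_Icc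
      constructor <;> nlinarith
    have hB : 0 ≤ Real.cos (π*t) := by
      apply Real.cos_nonneg_of_mem_Icc
      constructor <;> nlinarith
    simp only [abs_of_nonneg hA, abs_of_nonneg hB]
  rw [hfirst, hsecond, intervalIntegral.integral_neg, integral_cos_cos, integral_cos_cos]
  -- sine evaluations
  have e1 : Real.sin (2*π*(1/2:ℝ) - π*r) = Real.sin (π*r) := by
    rw [show 2*π*(1/2:ℝ) - π*r = π - π*r by ring, Real.sin_pi_sub]
  have e2 : Real.sin (2*π*(-(1:ℝ)/2) - π*r) = Real.sin (π*r) := by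
    rw [show 2*π*(-(1:ℝ)/2) - π*r = -(π + π*r) by ring, Real.sin_neg, Real.sin_add, Real.sin_pi, Real.cos_pi]; ring
  have e3 : Real.sin (2*π*c - π*r) = -Real.sin (π*r) := by
    rw [hcdef, show 2*π*(r - 1/2) - π*r = -(π - π*r) by ring, Real.sin_neg, Real.sin_pi_sub]
  have e4 : π * x / L = π * r := by rw [hrdef]; ring
  rw [e1, e2, e3, e4, hcdef]
  have hπ' : (π:ℝ) ≠ 0 := ne_of_gt hπ
  have hL' : L ≠ 0 := ne_of_gt hL
  field_simp
  ring
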